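/- arXiv:2412.03094 — 3 statements merged into one kernel-verified Lean document; each statement's English description precedes it below -/
import Mathlib

section
/- Let 𝒜 and ℬ be unital C*-algebras and let φ : 𝒜⁺⁺ → ℬ⁺⁺ be a surjective norm preserving order isomorphism. Then φ(t·1) = t·1 for every real t > 0. -/
private lemma norm_one_le_one' {A : Type*} [CStarAlgebra A] : ‖(1 : A)‖ ≤ 1 := by
  rcases subsingleton_or_nontrivial A with h | h
  · simp [Subsingleton.elim (1 : A) 0]
  · simp

private lemma smul_one_nonneg' {A : Type*} [CStarAlgebra A] [PartialOrder A]
    [StarOrderedRing A] {t : ℝ} (ht : 0 ≤ t) : (0 : A) ≤ t • 1 :=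
  smul_nonneg ht zero_le_one

private lemma smul_one_isUnit' {A : Type*} [CStarAlgebra A] {t : ℝ} (ht : t ≠ 0) :
    IsUnit (t • (1 : A)) :=
  ⟨⟨t • 1, t⁻¹ • 1, by simp [smul_smul, mul_inv_cancel₀ ht, inv_mul_cancel₀ ht],
    by simp [smul_smul, mul_inv_cancel₀ ht, inv_mul_cancel₀ ht]⟩, rfl⟩

private lemma smul_one_le_smul_one' {A : Type*} [CStarAlgebra A] [PartialOrder A]
    [StarOrderedRing A] {s t : ℝ} (h : s ≤ t) : (s • (1 : A)) ≤ t • 1 := by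
  have : (0 : A) ≤ (t - s) • 1 := smul_one_nonneg' (by linarith)
  have := add_le_add_left this (s • (1 : A))
  simpa [← add_smul] using this

private lemma le_norm_smul_one' {A : Type*} [CStarAlgebra A] [PartialOrder A]
    [StarOrderedRing A] {a : A} (ha : 0 ≤ a) : a ≤ ‖a‖ • 1 := by
  have := IsSelfAdjoint.le_algebraMap_norm_self (a := a) (IsSelfAdjoint.of_nonneg ha)
  simpa [Algebra.algebraMap_eq_smul_one] using this

/-- Let `𝒜` and `ℬ` be unital C*-algebras and let `φ : 𝒜⁺⁺ → ℬ⁺⁺` be a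
surjective norm preserving order isomorphism.  Then `φ (t • 1) = t • 1` for every real `t > 0`.
Here the positive definite cone `𝒜⁺⁺` is the set of positive invertible elements, and `φ` is
modelled as a map on the whole algebra whose relevant properties are only required on the cone. -/
theorem stmt0 {A B : Type*} [CStarAlgebra A] [PartialOrder A] [StarOrderedRing A]
    [CStarAlgebra B] [PartialOrder B] [StarOrderedRing B]
    (φ : A → B)
    (hmap : ∀ a : A, 0 ≤ a → IsUnit a → 0 ≤ φ a ∧ IsUnit (φ a))
    (hsurj : ∀ b : B, 0 ≤ b → IsUnit b → ∃ a : A, 0 ≤ a ∧ IsUnit a ∧ φ a = b)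
    (hnorm : ∀ a : A, 0 ≤ a → IsUnit a → ‖φ a‖ = ‖a‖)
    (horder : ∀ a b : A, 0 ≤ a → IsUnit a → 0 ≤ b → IsUnit b → (a ≤ b ↔ φ a ≤ φ b)) :
    ∀ t : ℝ, 0 < t → φ (t • (1 : A)) = t • (1 : B) := by
  intro t ht
  have hxA0 : (0 : A) ≤ t • 1 := smul_one_nonneg' ht.le
  have hxAu : IsUnit (t • (1 : A)) := smul_one_isUnit' ht.ne'
  have hxB0 : (0 : B) ≤ t • 1 := smul_one_nonneg' ht.le
  have hxBu : IsUnit (t • (1 : B)) := smul_one_isUnit' ht.ne'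
  obtain ⟨hφ0, hφu⟩ := hmap _ hxA0 hxAu
  -- upper bound
  have hnx : ‖φ (t • (1 : A))‖ ≤ t := by
    rw [hnorm _ hxA0 hxAu, norm_smul]
    calc ‖t‖ * ‖(1 : A)‖ ≤ ‖t‖ * 1 := by
          exact mul_le_mul_of_nonneg_left norm_one_le_one' (norm_nonneg t)
      _ = t := by rw [mul_one, Real.norm_eq_abs, abs_of_pos ht]
  have hupper : φ (t • (1 : A)) ≤ t • 1 :=
    (le_norm_smul_one' hφ0).trans (smul_one_le_smul_one' hnx)
  -- lower bound
  obtain ⟨a, ha0, hau, hφa⟩ := hsurj (t • 1) hxB0 hxBu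
  have hna : ‖a‖ ≤ t := by
    have : ‖a‖ = ‖(t • (1 : B))‖ := by rw [← hφa, hnorm _ ha0 hau]
    rw [this, norm_smul]
    calc ‖t‖ * ‖(1 : B)‖ ≤ ‖t‖ * 1 := by
          exact mul_le_mul_of_nonneg_left norm_one_le_one' (norm_nonneg t)
      _ = t := by rw [mul_one, Real.norm_eq_abs, abs_of_pos ht]
  have hale : a ≤ t • 1 := (le_norm_smul_one' ha0).trans (smul_one_le_smul_one' hna)
  have hlower : (t : ℝ) • (1 : B) ≤ φ (t • (1 : A)) := by
    rw [← hφa]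
    exact (horder a _ ha0 hau hxA0 hxAu).mp hale
  exact le_antisymm hupper hlower
end

section
/- Let 𝒜 and ℬ be unital C*-algebras and let ψ : 𝒜⁺ → ℬ⁺ be a surjective order isomorphism with ψ(t·1) = t·1 for all t > 0. Then for every projection P ∈ 𝒜 and every t > 0 one has ψ(tP) = t·ψ(P). -/
/-!
Disjointness of positive elements (no common nonzero positive minorant) and maximality are notions
of the order on the positive cone, so `ψ` preserves them. For `s > 0`, `s • P` is maximal among the
`z ∈ [0, s • 1]` disjoint from `s • (1 - P)`. In a C*-algebra, a maximal such element `y` equals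
`min (2 y) (s • 1)` (functional calculus), so its spectrum lies in `{0, s}` and `ψ (s • P) = s • R`
for a projection `R`. For `0 ≤ t ≤ s`, `t • P` is the greatest positive element below both `s • P`
and `t • 1`, and likewise for `t • R`; hence `ψ (t • P) = t • R`, and `t = 1` identifies `R = ψ P`.
-/

def PosDisjoint {α : Type*} [Zero α] [LE α] (x y : α) : Prop :=
  ∀ w, 0 ≤ w → w ≤ x → w ≤ y → w = 0

theorem PosDisjoint.of_le_smul {α : Type*} [AddCommGroup α] [PartialOrder α] [Module ℝ α]
    [IsOrderedAddMonoid α] [PosSMulMono ℝ α] {x y z : α} (hxy : PosDisjoint x y) {c : ℝ}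
    (hc : 1 ≤ c) (hz : z ≤ c • x) :
    PosDisjoint z y := by
  intro w hw hwz hwy
  have hc₀ : 0 < c := zero_lt_one.trans_le hc
  have hcw : c⁻¹ • w ≤ x := by
    simpa [smul_smul, inv_mul_cancel₀ hc₀.ne'] using
      smul_le_smul_of_nonneg_left (hwz.trans hz) (inv_nonneg.2 hc₀.le)
  have hwy' : c⁻¹ • w ≤ y := by
    refine le_trans ?_ hwy
    simpa using smul_le_smul_of_nonneg_right (inv_le_one_of_one_le₀ hc) hw
  simpa [hc₀.ne'] using hxy _ (smul_nonneg (inv_nonneg.2 hc₀.le) hw) hcw hwy'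

section CStarAlgebra

variable {A : Type*} [CStarAlgebra A] [PartialOrder A] [StarOrderedRing A]

namespace IsStarProjection

variable {P w : A}

theorem conjugate_of_nonneg_of_le_smul (hP : IsStarProjection P) (hw : 0 ≤ w) {c : ℝ}
    (hc : 0 < c) (hwc : w ≤ c • P) : P * w * P = w := by
  have := hP.conjugate_of_nonneg_of_le (smul_nonneg (inv_nonneg.2 hc.le) hw)
    ((inv_smul_le_iff_of_pos hc).2 hwc)
  simpa [smul_mul_assoc, mul_smul_comm, hc.ne'] using this

theorem le_smul_of_le_smul_of_le_smul_one (hP : IsStarProjection P) (hw : 0 ≤ w) {c d : ℝ}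
    (hc : 0 < c) (hwc : w ≤ c • P) (hwd : w ≤ d • 1) : w ≤ d • P :=
  calc w = P * w * P := (hP.conjugate_of_nonneg_of_le_smul hw hc hwc).symm
    _ ≤ P * (d • 1) * P := conjugate_le_conjugate_of_nonneg hwd hP.nonneg
    _ = d • P := by rw [mul_smul_comm, mul_one, smul_mul_assoc, hP.isIdempotentElem.eq]

theorem isGreatest_smul (hP : IsStarProjection P) {s t : ℝ} (hs : 0 < s) (ht : 0 ≤ t)
    (hts : t ≤ s) : IsGreatest {w | 0 ≤ w ∧ w ≤ s • P ∧ w ≤ t • 1} (t • P) :=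
  ⟨⟨smul_nonneg ht hP.nonneg, smul_le_smul_of_nonneg_right hts hP.nonneg,
      smul_le_smul_of_nonneg_left hP.le_one ht⟩,
    fun _ ⟨hw, hws, hwt⟩ => hP.le_smul_of_le_smul_of_le_smul_one hw hs hws hwt⟩

theorem posDisjoint_smul_smul_one_sub (hP : IsStarProjection P) {c d : ℝ} (hc : 0 < c)
    (hd : 0 < d) : PosDisjoint (c • P) (d • (1 - P)) := by
  intro w hw hwc hwd
  calc w = P * ((1 - P) * w * (1 - P)) * P := by
        rw [hP.one_sub.conjugate_of_nonneg_of_le_smul hw hd hwd,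
          hP.conjugate_of_nonneg_of_le_smul hw hc hwc]
    _ = P * (1 - P) * w * ((1 - P) * P) := by noncomm_ring
    _ = 0 := by rw [hP.mul_one_sub_self, zero_mul, zero_mul]

theorem maximal_smul (hP : IsStarProjection P) {t : ℝ} (ht : 0 < t) :
    Maximal (fun z => 0 ≤ z ∧ z ≤ t • 1 ∧ PosDisjoint z (t • (1 - P))) (t • P) := by
  have htP : 0 ≤ t • P := smul_nonneg ht.le hP.nonneg
  refine ⟨⟨htP, smul_le_smul_of_nonneg_left hP.le_one ht.le,
    hP.posDisjoint_smul_smul_one_sub ht ht⟩, ?_⟩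
  rintro z ⟨-, hzt, hz⟩ hPz
  -- `z - t • P` lies below both `z` and `t • (1 - P)`
  have := hz (z - t • P) (sub_nonneg.2 hPz) (sub_le_self z htP)
    (by rw [smul_sub]; exact sub_le_sub_right hzt _)
  exact (sub_eq_zero.1 this).le

end IsStarProjection

theorem exists_isStarProjection_eq_smul_of_maximal {t : ℝ} (ht : 0 < t) {x y : A}
    (hy : Maximal (fun z => 0 ≤ z ∧ z ≤ t • 1 ∧ PosDisjoint z x) y) :
    ∃ R : A, IsStarProjection R ∧ y = t • R := by
  obtain ⟨⟨hy₀, hyt, hyx⟩, hmax⟩ := hy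
  have hspec : ∀ r ∈ spectrum ℝ y, 0 ≤ r ∧ r ≤ t := fun r hr =>
    ⟨spectrum_nonneg_of_nonneg hy₀ hr,
      (le_algebraMap_iff_spectrum_le (R := ℝ) (a := y)).1
        (by rwa [Algebra.algebraMap_eq_smul_one]) r hr⟩
  have hfy : cfc (fun r : ℝ => min (2 * r) t) y = cfc (fun r : ℝ => r) y := by
    have hle : y ≤ cfc (fun r : ℝ => min (2 * r) t) y := by
      conv_lhs => rw [← cfc_id' ℝ y]
      exact cfc_mono fun r hr => le_min (by linarith [hspec r hr]) (hspec r hr).2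
    refine (le_antisymm (hmax ⟨hy₀.trans hle, ?_, hyx.of_le_smul one_le_two ?_⟩ hle) hle).trans
      (cfc_id' ℝ y).symm
    · rw [← Algebra.algebraMap_eq_smul_one, ← cfc_const t y]
      exact cfc_mono fun r _ => min_le_right _ _
    · rw [← cfc_const_mul_id 2 y]
      exact cfc_mono fun r _ => min_le_left _ _
  have hspec_sq : ∀ r ∈ spectrum ℝ y, r * r = t * r := by
    intro r hr
    have h := (cfc_eq_cfc_iff_eqOn (a := y)).1 hfy hr
    have := hspec r hr
    rcases min_choice (2 * r) t with h' | h' <;> rw [h'] at h <;> nlinarith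
  have hyy : y * y = t • y := by
    rw [← cfc_const_mul_id t y, ← cfc_congr hspec_sq, cfc_mul (fun r => r) (fun r => r) y,
      cfc_id' ℝ y]
  refine ⟨t⁻¹ • y, ⟨?_, (IsSelfAdjoint.all t⁻¹).smul (IsSelfAdjoint.of_nonneg hy₀)⟩, ?_⟩
  · rw [IsIdempotentElem, smul_mul_smul_comm, hyy, smul_smul]
    congr 1
    field_simp
  · rw [smul_smul, mul_inv_cancel₀ ht.ne', one_smul]

end CStarAlgebra

/-- `ψ` restricts to an order isomorphism between the positive cones; its values elsewhere are
irrelevant. -/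
structure IsNonnegOrderIso {A B : Type*} [Zero A] [LE A] [Zero B] [LE B] (ψ : A → B) :
    Prop where
  nonneg_map : ∀ a : A, 0 ≤ a → 0 ≤ ψ a
  exists_nonneg_map_eq : ∀ b : B, 0 ≤ b → ∃ a : A, 0 ≤ a ∧ ψ a = b
  le_iff_map_le : ∀ a b : A, 0 ≤ a → 0 ≤ b → (a ≤ b ↔ ψ a ≤ ψ b)

namespace IsNonnegOrderIso

section Order

variable {A B : Type*} [Zero A] [PartialOrder A] [Zero B] [PartialOrder B] {ψ : A → B}
  (hψ : IsNonnegOrderIso ψ)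
include hψ

theorem map_zero : ψ 0 = 0 := by
  obtain ⟨a, ha, hψa⟩ := hψ.exists_nonneg_map_eq 0 le_rfl
  have : a ≤ 0 := (hψ.le_iff_map_le a 0 ha le_rfl).2 (hψa ▸ hψ.nonneg_map 0 le_rfl)
  rw [← hψa, le_antisymm this ha]

theorem map_eq_zero_iff {a : A} (ha : 0 ≤ a) : ψ a = 0 ↔ a = 0 := by
  refine ⟨fun h => le_antisymm ?_ ha, fun h => h ▸ hψ.map_zero⟩
  exact (hψ.le_iff_map_le a 0 ha le_rfl).2 (by rw [h, hψ.map_zero])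

theorem posDisjoint_map_iff {x y : A} (hx : 0 ≤ x) (hy : 0 ≤ y) :
    PosDisjoint (ψ x) (ψ y) ↔ PosDisjoint x y := by
  constructor
  · intro h w hw hwx hwy
    exact (hψ.map_eq_zero_iff hw).1 <| h _ (hψ.nonneg_map w hw)
      ((hψ.le_iff_map_le w x hw hx).1 hwx) ((hψ.le_iff_map_le w y hw hy).1 hwy)
  · intro h w hw hwx hwy
    obtain ⟨a, ha, rfl⟩ := hψ.exists_nonneg_map_eq w hw
    rw [h a ha ((hψ.le_iff_map_le a x ha hx).2 hwx) ((hψ.le_iff_map_le a y ha hy).2 hwy),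
      hψ.map_zero]

variable {p : A → Prop} {q : B → Prop} (hq : ∀ b, q b → 0 ≤ b)
  (hpq : ∀ a, 0 ≤ a → (q (ψ a) ↔ p a))
include hq hpq

theorem maximal_map {x : A} (hx : 0 ≤ x) (h : Maximal p x) : Maximal q (ψ x) := by
  refine ⟨(hpq x hx).2 h.1, fun b hb hxb => ?_⟩
  obtain ⟨a, ha, rfl⟩ := hψ.exists_nonneg_map_eq b (hq b hb)
  exact (hψ.le_iff_map_le a x ha hx).1
    (h.2 ((hpq a ha).1 hb) ((hψ.le_iff_map_le x a hx ha).2 hxb))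

theorem isGreatest_map {x : A} (hx : 0 ≤ x) (h : IsGreatest {a | p a} x) :
    IsGreatest {b | q b} (ψ x) := by
  refine ⟨(hpq x hx).2 h.1, fun b hb => ?_⟩
  obtain ⟨a, ha, rfl⟩ := hψ.exists_nonneg_map_eq b (hq b hb)
  exact (hψ.le_iff_map_le a x ha hx).1 (h.2 ((hpq a ha).1 hb))

end Order

variable {A B : Type*} [CStarAlgebra A] [PartialOrder A] [StarOrderedRing A]
  [CStarAlgebra B] [PartialOrder B] [StarOrderedRing B] {ψ : A → B} (hψ : IsNonnegOrderIso ψ)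
  {P : A} (hP : IsStarProjection P) {s : ℝ} (hs : 0 < s)
include hψ hP hs

theorem exists_isStarProjection_map_smul_eq (hψs : ψ (s • 1) = s • 1) :
    ∃ R : B, IsStarProjection R ∧ ψ (s • P) = s • R := by
  refine exists_isStarProjection_eq_smul_of_maximal hs (x := ψ (s • (1 - P)))
    (hψ.maximal_map (fun _ hb => hb.1) (fun a ha => ?_) (smul_nonneg hs.le hP.nonneg)
      (hP.maximal_smul hs))
  rw [← hψs, ← hψ.le_iff_map_le _ _ ha (smul_nonneg hs.le zero_le_one),
    hψ.posDisjoint_map_iff ha (smul_nonneg hs.le hP.one_sub_nonneg)]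
  simp only [ha, hψ.nonneg_map a ha, true_and]

theorem map_smul_eq_smul {R : B} (hR : IsStarProjection R) (hsR : ψ (s • P) = s • R) {t : ℝ}
    (ht : 0 ≤ t) (hts : t ≤ s) (hψt : ψ (t • 1) = t • 1) : ψ (t • P) = t • R := by
  refine (hψ.isGreatest_map (q := fun b => 0 ≤ b ∧ b ≤ s • R ∧ b ≤ t • 1) (fun _ hb => hb.1)
    (fun a ha => ?_) (smul_nonneg ht hP.nonneg) (hP.isGreatest_smul hs ht hts)).unique
    (hR.isGreatest_smul hs ht hts)
  rw [← hsR, ← hψt, ← hψ.le_iff_map_le _ _ ha (smul_nonneg hs.le hP.nonneg),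
    ← hψ.le_iff_map_le _ _ ha (smul_nonneg ht zero_le_one)]
  simp only [ha, hψ.nonneg_map a ha, true_and]

end IsNonnegOrderIso

/-- Let `ψ : 𝒜⁺ → ℬ⁺` be a surjective order isomorphism between the positive
cones of unital C*-algebras with `ψ (t • 1) = t • 1` for all `t > 0`.  Then for every
projection `P ∈ 𝒜` and every `t > 0` one has `ψ (t • P) = t • ψ P`. -/
theorem stmt8 {A B : Type*} [CStarAlgebra A] [PartialOrder A] [StarOrderedRing A]
    [CStarAlgebra B] [PartialOrder B] [StarOrderedRing B]
    (ψ : A → B)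
    (hmap : ∀ a : A, 0 ≤ a → 0 ≤ ψ a)
    (hsurj : ∀ b : B, 0 ≤ b → ∃ a : A, 0 ≤ a ∧ ψ a = b)
    (horder : ∀ a b : A, 0 ≤ a → 0 ≤ b → (a ≤ b ↔ ψ a ≤ ψ b))
    (hunit : ∀ t : ℝ, 0 < t → ψ (t • (1 : A)) = t • (1 : B)) :
    ∀ P : A, IsSelfAdjoint P → IsIdempotentElem P →
      ∀ t : ℝ, 0 < t → ψ (t • P) = t • ψ P := by
  intro P hPsa hPidem t ht
  have hψ : IsNonnegOrderIso ψ := ⟨hmap, hsurj, horder⟩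
  have hP : IsStarProjection P := ⟨hPidem, hPsa⟩
  have hs : 0 < t + 1 := by linarith
  obtain ⟨R, hR, hsR⟩ := hψ.exists_isStarProjection_map_smul_eq hP hs (hunit _ hs)
  have hψP : ψ P = R := by
    simpa using hψ.map_smul_eq_smul hP hs hR hsR zero_le_one (by linarith) (hunit 1 one_pos)
  rw [hψ.map_smul_eq_smul hP hs hR hsR ht.le (by linarith) (hunit t ht), hψP]
end

section
/- Let H be a complex Hilbert space, let A be a positive invertible bounded operator on H, and let P be a nonzero projection on H. Then the set {λ ∈ ℝ : λ ≥ 0 and λP ≤ P A⁻¹ P} has a greatest element, namely ‖A # P‖⁻², i.e. ‖A # P‖² · max{λ ≥ 0 : λP ≤ P A⁻¹ P} = 1. -/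
/-!
With `S = A^{1/2}` and `C = S⁻¹ P S⁻¹`, conjugation by `S` turns `λ P ≤ P A⁻¹ P` into
`λ C ≤ C²`, i.e. into the condition that the spectrum of `C` lies in `{0} ∪ [λ, ∞)`. Since
`P² = P` we have `C A C = C`, hence `C ≤ ‖A‖ C²`, so such a spectral gap exists. The greatest `λ`
is therefore the least nonzero spectral value of `C`, i.e. `‖C⁺‖⁻¹` for the pseudo-inverse
`C⁺ = cfc (·⁻¹) C` (recall `0⁻¹ = 0`).

On the other side `A # P = S C^{1/2} S`, and `C A C = C` turns `C^{1/2} A C^{1/2}` into the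
support projection `E = C C⁺` of `C`. Thus `‖A # P‖² = ‖S E S‖ = ‖E A E‖ = ‖C⁺ C C⁺‖ = ‖C⁺‖`.
-/

/-- The geometric mean `A # B = A^{1/2} (A^{-1/2} B A^{-1/2})^{1/2} A^{1/2}` of operators,
where square roots are taken via the continuous functional calculus and `A^{-1/2}` is the
(ring) inverse of `A^{1/2}`. -/
noncomputable def geomMean {H : Type*} [NormedAddCommGroup H] [InnerProductSpace ℂ H]
    [CompleteSpace H] (A B : H →L[ℂ] H) : H →L[ℂ] H :=
  CFC.sqrt A * CFC.sqrt (Ring.inverse (CFC.sqrt A) * B * Ring.inverse (CFC.sqrt A)) *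
    CFC.sqrt A

lemma IsUnit.star_left_conjugate_le_conjugate_iff {R : Type*} [Ring R] [PartialOrder R]
    [StarRing R] [StarOrderedRing R] {u x y : R} (hu : IsUnit u) :
    star u * x * u ≤ star u * y * u ↔ x ≤ y := by
  rw [← sub_nonneg, ← sub_mul, ← mul_sub, hu.star_left_conjugate_nonneg_iff, sub_nonneg]

section CStarAlgebra

variable {𝒜 : Type*} [CStarAlgebra 𝒜] {c s : 𝒜}

lemma IsStarProjection.norm_conjugate {k : 𝒜} (hk : IsStarProjection k)
    (hs : IsSelfAdjoint s) : ‖s * k * s‖ = ‖k * (s * s) * k‖ := by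
  have hstar : star (k * s) = s * k := by rw [star_mul, hs.star_eq, hk.isSelfAdjoint.star_eq]
  have h₁ : s * k * s = star (k * s) * (k * s) := by
    rw [hstar, ← mul_assoc, mul_assoc s k k, hk.isIdempotentElem.eq]
  have h₂ : k * (s * s) * k = (k * s) * star (k * s) := by
    rw [hstar]; simp only [mul_assoc]
  rw [h₁, h₂, CStarRing.norm_star_mul_self, CStarRing.norm_self_mul_star]

lemma cfc_mul_mul_cfc_of_mul_mul_eq {a : 𝒜} (hc : IsSelfAdjoint c) (hcac : c * a * c = c)
    (hinv : ContinuousOn (·⁻¹ : ℝ → ℝ) (spectrum ℝ c)) {f g : ℝ → ℝ}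
    (hf : ContinuousOn f (spectrum ℝ c)) (hg : ContinuousOn g (spectrum ℝ c))
    (hf0 : f 0 = 0) (hg0 : g 0 = 0) :
    cfc f c * a * cfc g c = cfc (fun t => f t * t⁻¹ * g t) c := by
  have hcancel (t : ℝ) : f t * t⁻¹ * t = f t ∧ t * (t⁻¹ * g t) = g t := by
    rcases eq_or_ne t 0 with rfl | ht
    · simp [hf0, hg0]
    · constructor <;> field_simp
  have hf' : cfc f c = cfc (fun t => f t * t⁻¹) c * c := by
    have h := cfc_mul (fun t => f t * t⁻¹) (fun t => t) c (hf.mul hinv)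
    rwa [cfc_id' ℝ c, funext fun t => (hcancel t).1] at h
  have hg' : cfc g c = c * cfc (fun t => t⁻¹ * g t) c := by
    have h := cfc_mul (fun t => t) (fun t => t⁻¹ * g t) c continuousOn_id (hinv.mul hg)
    rwa [cfc_id' ℝ c, funext fun t => (hcancel t).2] at h
  calc cfc f c * a * cfc g c
      = cfc (fun t => f t * t⁻¹) c * (c * a * c) * cfc (fun t => t⁻¹ * g t) c := by
        rw [hf', hg']; simp only [mul_assoc]
    _ = cfc f c * cfc (fun t => t⁻¹ * g t) c := by rw [hcac, ← hf']
    _ = cfc (fun t => f t * t⁻¹ * g t) c := by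
        rw [← cfc_mul f (fun t => t⁻¹ * g t) c hf (hinv.mul hg)]; simp only [mul_assoc]

variable [PartialOrder 𝒜] [StarOrderedRing 𝒜]

lemma smul_le_mul_self_iff (hc : 0 ≤ c) (l : ℝ) :
    l • c ≤ c * c ↔ ∀ t ∈ spectrum ℝ c, t = 0 ∨ l ≤ t := by
  rw [← cfc_const_mul_id l c, ← sq, ← cfc_pow_id (R := ℝ) c 2, cfc_le_iff _ _ c]
  refine forall₂_congr fun t ht => ?_
  have ht0 : 0 ≤ t := spectrum_nonneg_of_nonneg hc ht
  rw [sq]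
  constructor
  · intro h
    rcases ht0.eq_or_lt with h0 | h0
    · exact .inl h0.symm
    · exact .inr (le_of_mul_le_mul_right h h0)
  · rintro (rfl | h)
    · simp
    · exact mul_le_mul_of_nonneg_right h ht0

lemma exists_pos_smul_le_mul_self_of_mul_mul_eq {a : 𝒜} (hc : IsSelfAdjoint c) (hc0 : c ≠ 0)
    (ha : IsSelfAdjoint a) (hcac : c * a * c = c) : ∃ l : ℝ, 0 < l ∧ l • c ≤ c * c := by
  have h := hc.conjugate_le_conjugate ha.le_algebraMap_norm_self
  rw [hcac, Algebra.algebraMap_eq_smul_one, mul_smul_comm, smul_mul_assoc, mul_one] at h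
  have ha0 : 0 < ‖a‖ := norm_pos_iff.2 fun ha0 => hc0 (by rw [← hcac, ha0, mul_zero, zero_mul])
  refine ⟨‖a‖⁻¹, inv_pos.2 ha0, ?_⟩
  calc ‖a‖⁻¹ • c ≤ ‖a‖⁻¹ • ‖a‖ • (c * c) := smul_le_smul_of_nonneg_left h (by positivity)
    _ = c * c := by rw [smul_smul, inv_mul_cancel₀ ha0.ne', one_smul]

lemma continuousOn_inv_spectrum_of_smul_le_mul_self (hc : 0 ≤ c) {l : ℝ} (hl : 0 < l)
    (h : l • c ≤ c * c) : ContinuousOn (·⁻¹ : ℝ → ℝ) (spectrum ℝ c) := by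
  have hsub : spectrum ℝ c ⊆ {0} ∪ Set.Ici l := fun t ht =>
    ((smul_le_mul_self_iff hc l).1 h t ht).imp id id
  refine ContinuousOn.mono ?_ hsub
  refine continuousOn_singleton _ _ |>.union_of_isClosed ?_ isClosed_singleton isClosed_Ici
  exact continuousOn_inv₀.mono fun t (ht : l ≤ t) => (hl.trans_le ht).ne'

theorem isGreatest_smul_le_mul_self (hc : 0 ≤ c) (hc0 : c ≠ 0) {l₀ : ℝ} (hl₀ : 0 < l₀)
    (h₀ : l₀ • c ≤ c * c) :
    IsGreatest {l : ℝ | 0 ≤ l ∧ l • c ≤ c * c} ‖cfc (·⁻¹ : ℝ → ℝ) c‖⁻¹ := by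
  have hinv := continuousOn_inv_spectrum_of_smul_le_mul_self hc hl₀ h₀
  set N := ‖cfc (·⁻¹ : ℝ → ℝ) c‖
  have hle_N : ∀ t ∈ spectrum ℝ c, t⁻¹ ≤ N := fun t ht =>
    (le_abs_self _).trans (norm_apply_le_norm_cfc _ c ht hinv hc.isSelfAdjoint)
  have hspec_nonneg : ∀ t ∈ spectrum ℝ c, 0 ≤ t := fun t ht => spectrum_nonneg_of_nonneg hc ht
  obtain ⟨t₁, ht₁, ht₁0⟩ : ∃ t ∈ spectrum ℝ c, t ≠ 0 := by
    by_contra! h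
    exact hc0 (CFC.eq_zero_of_spectrum_subset_zero (R := ℝ) c h hc.isSelfAdjoint)
  have hN : 0 < N :=
    (inv_pos.2 ((hspec_nonneg t₁ ht₁).lt_of_ne' ht₁0)).trans_le (hle_N t₁ ht₁)
  refine ⟨⟨inv_nonneg.2 hN.le, (smul_le_mul_self_iff hc _).2 fun t ht => ?_⟩, ?_⟩
  · rcases (hspec_nonneg t ht).eq_or_lt with h0 | h0
    · exact .inl h0.symm
    · exact .inr ((inv_le_comm₀ h0 hN).1 (hle_N t ht))
  · rintro l ⟨hl, hlc⟩
    rcases hl.eq_or_lt with rfl | hl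
    · exact inv_nonneg.2 hN.le
    refine (le_inv_comm₀ hl hN).2 (norm_cfc_le (inv_nonneg.2 hl.le) fun t ht => ?_)
    rcases (smul_le_mul_self_iff hc l).1 hlc t ht with rfl | hlt
    · simpa using hl.le
    · rw [Real.norm_of_nonneg (inv_nonneg.2 (hl.trans_le hlt).le)]
      exact inv_anti₀ hl hlt

lemma norm_mul_cfcSqrt_mul_sq (hs : IsSelfAdjoint s) (hc : 0 ≤ c) (hcac : c * (s * s) * c = c)
    (hinv : ContinuousOn (·⁻¹ : ℝ → ℝ) (spectrum ℝ c)) :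
    ‖s * CFC.sqrt c * s‖ ^ 2 = ‖cfc (·⁻¹ : ℝ → ℝ) c‖ := by
  have hsa : IsSelfAdjoint c := hc.isSelfAdjoint
  set k := cfc (fun t : ℝ => t * t⁻¹) c
  have hk_cont : ContinuousOn (fun t : ℝ => t * t⁻¹) (spectrum ℝ c) := continuousOn_id.mul hinv
  have hk : IsStarProjection k := by
    refine ⟨?_, IsSelfAdjoint.cfc⟩
    rw [IsIdempotentElem, ← cfc_mul _ _ c hk_cont hk_cont]
    refine cfc_congr fun t _ => ?_
    rcases eq_or_ne t 0 with rfl | ht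
    · simp
    · field_simp
  have hsqrt : CFC.sqrt c * (s * s) * CFC.sqrt c = k := by
    rw [CFC.sqrt_eq_real_sqrt c, cfcₙ_eq_cfc, cfc_mul_mul_cfc_of_mul_mul_eq hsa hcac hinv
      Real.continuous_sqrt.continuousOn Real.continuous_sqrt.continuousOn Real.sqrt_zero
      Real.sqrt_zero]
    refine cfc_congr fun t ht => ?_
    rw [mul_right_comm, Real.mul_self_sqrt (spectrum_nonneg_of_nonneg hc ht)]
  have hkk : k * (s * s) * k = cfc (·⁻¹ : ℝ → ℝ) c := by
    rw [cfc_mul_mul_cfc_of_mul_mul_eq hsa hcac hinv hk_cont hk_cont (by simp) (by simp)]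
    refine cfc_congr fun t _ => ?_
    rcases eq_or_ne t 0 with rfl | ht
    · simp
    · field_simp
  have hG : IsSelfAdjoint (s * CFC.sqrt c * s) :=
    (CFC.sqrt_nonneg c).isSelfAdjoint.conjugate_self hs
  calc ‖s * CFC.sqrt c * s‖ ^ 2 = ‖s * (CFC.sqrt c * (s * s) * CFC.sqrt c) * s‖ := by
        rw [← hG.norm_mul_self]; simp only [mul_assoc]
    _ = ‖cfc (·⁻¹ : ℝ → ℝ) c‖ := by rw [hsqrt, hk.norm_conjugate hs, hkk]

theorem IsStarProjection.isGreatest_smul_le_mul_ringInverse_mul {p : 𝒜} (hp : IsStarProjection p)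
    (hp0 : p ≠ 0) (hs : IsSelfAdjoint s) (hsu : IsUnit s) :
    IsGreatest {l : ℝ | 0 ≤ l ∧ l • p ≤ p * Ring.inverse (s * s) * p}
      (‖s * CFC.sqrt (Ring.inverse s * p * Ring.inverse s) * s‖ ^ 2)⁻¹ := by
  set s' := Ring.inverse s
  set c := s' * p * s'
  have hs's : s' * s = 1 := Ring.inverse_mul_cancel s hsu
  have hss' : s * s' = 1 := Ring.mul_inverse_cancel s hsu
  have hs' : IsSelfAdjoint s' := hs.ringInverse
  have hs'u : IsUnit s' := hsu.ringInverse
  have hinv_sq : Ring.inverse (s * s) = s' * s' := Ring.mul_inverse_rev' (.refl s)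
  have hc : 0 ≤ c := hs'.conjugate_nonneg hp.nonneg
  have hcac : c * (s * s) * c = c := by
    calc c * (s * s) * c = s' * p * (s' * s) * (s * s') * p * s' := by simp only [c, mul_assoc]
      _ = c := by rw [hs's, hss', mul_one, mul_one, mul_assoc s' p p, hp.isIdempotentElem.eq]
  have hc0 : c ≠ 0 := by
    rintro hc0
    apply hp0
    calc p = s * s' * p * (s' * s) := by rw [hss', hs's, one_mul, mul_one]
      _ = s * c * s := by simp only [c, mul_assoc]
      _ = 0 := by rw [hc0, mul_zero, zero_mul]
  have hset : {l : ℝ | 0 ≤ l ∧ l • p ≤ p * Ring.inverse (s * s) * p} =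
      {l : ℝ | 0 ≤ l ∧ l • c ≤ c * c} := by
    ext l
    refine and_congr_right fun _ => ?_
    rw [← hs'u.star_left_conjugate_le_conjugate_iff, hs'.star_eq, hinv_sq]
    simp only [c, mul_smul_comm, smul_mul_assoc, mul_assoc]
  obtain ⟨l₀, hl₀, h₀⟩ := exists_pos_smul_le_mul_self_of_mul_mul_eq hc.isSelfAdjoint hc0
    (by simpa only [hs.star_eq] using IsSelfAdjoint.star_mul_self s) hcac
  rw [hset, norm_mul_cfcSqrt_mul_sq hs hc hcac
    (continuousOn_inv_spectrum_of_smul_le_mul_self hc hl₀ h₀)]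
  exact isGreatest_smul_le_mul_self hc hc0 hl₀ h₀

end CStarAlgebra

/-- Let `H` be a complex Hilbert space, `A` a positive invertible bounded
operator on `H`, and `P` a nonzero projection on `H`.  Then the set
`{λ : ℝ | 0 ≤ λ ∧ λ • P ≤ P A⁻¹ P}` has a greatest element, namely `‖A # P‖⁻²`. -/
theorem stmt10 {H : Type*} [NormedAddCommGroup H] [InnerProductSpace ℂ H] [CompleteSpace H]
    (A P : H →L[ℂ] H) (hA : 0 ≤ A) (hAinv : IsUnit A)
    (hsa : IsSelfAdjoint P) (hidem : IsIdempotentElem P) (hP : P ≠ 0) :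
    IsGreatest {lam : ℝ | 0 ≤ lam ∧ lam • P ≤ P * Ring.inverse A * P}
      (‖geomMean A P‖ ^ 2)⁻¹ := by
  have h := IsStarProjection.isGreatest_smul_le_mul_ringInverse_mul ⟨hidem, hsa⟩ hP
    (CFC.sqrt_nonneg A).isSelfAdjoint ((CFC.isUnit_sqrt_iff A hA).2 hAinv)
  rwa [CFC.sqrt_mul_sqrt_self A hA] at h
end
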